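/- For the map f at μ = 4 written as (x₁,y₁) = (-x + b(x-y), x-y) with b(u) = 2π(cos u - 1) + 4(u - sin u), the Taylor coefficients satisfy b₂ = -π, b₃ = 2/3, and 2b₃ + b₂² = 4/3 + π² > 0. -/

import Mathlib

open Real

theorem iteratedDeriv_cos_sub_one_add_sub_sin {n : ℕ} (hn : 2 ≤ n) (a c x : ℝ) :
    iteratedDeriv n (fun u => a * (cos u - 1) + c * (u - sin u)) x =
      a * iteratedDeriv n cos x - c * iteratedDeriv n sin x := by
  have hcos : ContDiff ℝ n fun u => a * (cos u - 1) := by fun_prop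
  have hsin : ContDiff ℝ n fun u => c * (u - sin u) := by fun_prop
  rw [iteratedDeriv_fun_add hcos.contDiffAt hsin.contDiffAt, iteratedDeriv_const_mul_field,
    iteratedDeriv_const_mul_field, iteratedDeriv_fun_sub (by fun_prop) (by fun_prop),
    iteratedDeriv_fun_sub (by fun_prop) (by fun_prop), iteratedDeriv_const, iteratedDeriv_fun_id,
    if_neg (by omega), if_neg (by omega), if_neg (by omega)]
  ring

/-- For `b(u) = 2π(cos u - 1) + 4(u - sin u)`, the Taylor coefficients satisfy
`b₂ = b''(0)/2 = -π`, `b₃ = b'''(0)/6 = 2/3`, and `2b₃ + b₂² = 4/3 + π² > 0`. -/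
theorem stmt_17
    (b : ℝ → ℝ)
    (hb : ∀ u, b u = 2 * π * (Real.cos u - 1) + 4 * (u - Real.sin u)) :
    iteratedDeriv 2 b 0 / 2 = -π ∧ iteratedDeriv 3 b 0 / 6 = 2 / 3 ∧
    2 * (iteratedDeriv 3 b 0 / 6) + (iteratedDeriv 2 b 0 / 2) ^ 2 = 4 / 3 + π ^ 2 ∧
    (0 : ℝ) < 4 / 3 + π ^ 2 := by
  obtain rfl : b = fun u => 2 * π * (cos u - 1) + 4 * (u - sin u) := funext hb
  have hb₂ : iteratedDeriv 2 (fun u => 2 * π * (cos u - 1) + 4 * (u - sin u)) 0 = -2 * π := by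
    rw [iteratedDeriv_cos_sub_one_add_sub_sin le_rfl]
    simp [iteratedDeriv_succ]
  have hb₃ : iteratedDeriv 3 (fun u => 2 * π * (cos u - 1) + 4 * (u - sin u)) 0 = 4 := by
    rw [iteratedDeriv_cos_sub_one_add_sub_sin (by norm_num)]
    simp [iteratedDeriv_succ]
  rw [hb₂, hb₃]
  exact ⟨by ring, by norm_num, by ring, by positivity⟩
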